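/- arXiv:1401.7134 — 2 statements merged into one kernel-verified Lean document; each statement's English description precedes it below -/
import Mathlib

section
/- Let X, Y be finite random variables with joint law P_{XY}, marginals P_X, P_Y, and let Ȳ ~ P_Y be independent of X. With i(x;y) = log(P_{XY}(x,y)/(P_X(x)P_Y(y))), for every γ > 0: P(i(X;Y) ≤ log γ) + γ·P(i(X;Ȳ) > log γ) = E[exp(−|i(X;Y) − log γ|⁺)], where |x|⁺ = max(x,0). -/
/-! Both sides are `∑ₓ,ᵧ min (P_XY x y) (γ P_X x P_Y y)`. Termwise, the left side picks `P_XY` where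
`P_XY ≤ γ P_X P_Y` and `γ P_X P_Y` elsewhere, while `exp (-|i - log γ|⁺) = min (γ P_X P_Y / P_XY) 1`.
A zero of `P_X P_Y` forces a zero of `P_XY`, so the junk value of `log (p / 0)` never matters. -/

open Real Finset

lemma mul_ite_le_add_mul_ite_gt_eq_min (p c : ℝ) :
    p * (if p ≤ c then 1 else 0) + c * (if p > c then 1 else 0) = min p c := by
  by_cases h : p ≤ c
  · simp [h, not_lt.mpr h]
  · simp [h, lt_of_not_ge h, (lt_of_not_ge h).le]

lemma mul_exp_neg_max_log_div_sub_log {p q γ : ℝ} (hp : 0 ≤ p) (hq : 0 ≤ q)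
    (hpq : q = 0 → p = 0) (hγ : 0 < γ) :
    p * exp (-max (log (p / q) - log γ) 0) = min p (γ * q) := by
  rcases hp.eq_or_lt with rfl | hp
  · simp [mul_nonneg hγ.le hq]
  have hq : 0 < q := hq.lt_of_ne fun h => hp.ne' (hpq h.symm)
  calc p * exp (-max (log (p / q) - log γ) 0)
      = p * min (exp (log γ - log (p / q))) 1 := by
        rw [← min_neg_neg, neg_zero, neg_sub, exp_monotone.map_min, exp_zero]
    _ = p * min (γ * q / p) 1 := by
        rw [exp_sub, exp_log hγ, exp_log (div_pos hp hq), div_div_eq_mul_div]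
    _ = min p (γ * q) := by
        rw [mul_min_of_nonneg _ _ hp.le, mul_div_cancel₀ _ hp.ne', mul_one, min_comm]

section Marginals

variable {X Y : Type*} [Fintype X] [Fintype Y] {pXY : X → Y → ℝ} {pX : X → ℝ} {pY : Y → ℝ}

lemma marginal_mul_nonneg (hnn : ∀ x y, 0 ≤ pXY x y) (hpX : ∀ x, pX x = ∑ y, pXY x y)
    (hpY : ∀ y, pY y = ∑ x, pXY x y) (x : X) (y : Y) : 0 ≤ pX x * pY y := by
  rw [hpX, hpY]
  exact mul_nonneg (sum_nonneg fun _ _ => hnn _ _) (sum_nonneg fun _ _ => hnn _ _)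

lemma joint_eq_zero_of_marginal_mul_eq_zero (hnn : ∀ x y, 0 ≤ pXY x y)
    (hpX : ∀ x, pX x = ∑ y, pXY x y) (hpY : ∀ y, pY y = ∑ x, pXY x y) {x : X} {y : Y}
    (h : pX x * pY y = 0) : pXY x y = 0 := by
  rcases mul_eq_zero.mp h with h | h
  · rw [hpX, sum_eq_zero_iff_of_nonneg fun _ _ => hnn _ _] at h
    exact h y (mem_univ y)
  · rw [hpY, sum_eq_zero_iff_of_nonneg fun _ _ => hnn _ _] at h
    exact h x (mem_univ x)

end Marginals

theorem stmt_5_general {X Y : Type*} [Fintype X] [Fintype Y]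
    (pXY : X → Y → ℝ) (hnn : ∀ x y, 0 ≤ pXY x y)
    (pX : X → ℝ) (hpX : ∀ x, pX x = ∑ y, pXY x y)
    (pY : Y → ℝ) (hpY : ∀ y, pY y = ∑ x, pXY x y)
    (γ : ℝ) (hγ : 0 < γ) :
    (∑ x, ∑ y, pXY x y * (if pXY x y ≤ γ * (pX x * pY y) then (1 : ℝ) else 0))
      + γ * ∑ x, ∑ y, pX x * pY y * (if pXY x y > γ * (pX x * pY y) then (1 : ℝ) else 0)
    = ∑ x, ∑ y, pXY x y *
        Real.exp (-(max (Real.log (pXY x y / (pX x * pY y)) - Real.log γ) 0)) := by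
  simp only [mul_sum, ← sum_add_distrib]
  refine sum_congr rfl fun x _ => sum_congr rfl fun y _ => ?_
  rw [mul_exp_neg_max_log_div_sub_log (hnn x y) (marginal_mul_nonneg hnn hpX hpY x y)
    (joint_eq_zero_of_marginal_mul_eq_zero hnn hpX hpY) hγ, ← mul_ite_le_add_mul_ite_gt_eq_min,
    mul_assoc γ]

/-- DT-bound identity: P(i(X;Y) ≤ log γ) + γ·P(i(X;Ȳ) > log γ)
  = E[exp(−|i(X;Y) − log γ|⁺)], where i(x;y) = log(P_XY(x,y)/(P_X(x)P_Y(y))),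
the events are expressed via the equivalent support-safe comparisons
{P_XY ≤ γ P_X P_Y} and {P_XY > γ P_X P_Y}, and the expectation is over (X,Y) ~ P_XY. -/
theorem stmt_5 {X Y : Type*} [Fintype X] [Fintype Y]
    (pXY : X → Y → ℝ) (hnn : ∀ x y, 0 ≤ pXY x y)
    (hsum : ∑ x, ∑ y, pXY x y = 1)
    (pX : X → ℝ) (hpX : ∀ x, pX x = ∑ y, pXY x y)
    (pY : Y → ℝ) (hpY : ∀ y, pY y = ∑ x, pXY x y)
    (γ : ℝ) (hγ : 0 < γ) :
    (∑ x, ∑ y, pXY x y * (if pXY x y ≤ γ * (pX x * pY y) then (1 : ℝ) else 0))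
      + γ * ∑ x, ∑ y, pX x * pY y * (if pXY x y > γ * (pX x * pY y) then (1 : ℝ) else 0)
    = ∑ x, ∑ y, pXY x y *
        Real.exp (-(max (Real.log (pXY x y / (pX x * pY y)) - Real.log γ) 0)) :=
  stmt_5_general pXY hnn pX hpX pY hpY γ hγ
end

section
/- Consider a channel with input alphabet 𝒳, output alphabet 𝒴 (both finite), transition kernel P_{Y|X}, and input distribution P_X. For a codebook of M codewords c₁,…,c_M drawn i.i.d. from P_X, and the threshold decoder that outputs the smallest index j such that i(c_j; y) > log((M−1)/2), the average error probability (averaged over codebooks and equiprobable messages) is at most P(i(X;Y) ≤ log((M−1)/2)) + ((M−1)/2)·P(i(X;Ȳ) > log((M−1)/2)), where (X,Y) ~ P_X P_{Y|X} and Ȳ ~ P_Y is independent of X. -/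
open scoped Classical

/-- The threshold decoder: outputs the smallest index `j` such that the information
density test passes, i.e. `i(c j; y) > log t`, equivalently `W (c j) y > t * pY y`. -/
noncomputable def dtDecode {𝒳 𝒴 : Type*} [Fintype 𝒳] (M : ℕ)
    (W : 𝒳 → 𝒴 → ℝ) (pY : 𝒴 → ℝ) (t : ℝ) (c : Fin M → 𝒳) (y : 𝒴) : Option (Fin M) :=
  (Finset.univ.filter (fun j : Fin M => t * pY y < W (c j) y)).min

/-!
Union bound on the error event of message `j`: the threshold decoder misses `j` only if the codeword
`c j` fails the density test against the output `y`, or some earlier codeword `c j'`, `j' < j`,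
passes it. Averaged over the i.i.d. codebook, the first event has probability `P(i(X;Y) ≤ log t)`;
since `c j'` is independent of `(c j, y)`, each of the `j` others has probability
`P(i(X;Ȳ) > log t)`. Averaging `j` over the `M` equiprobable messages gives the factor `(M - 1) / 2`.
-/

open Finset

section ProductWeights

variable {ι α : Type*} [Fintype ι] [DecidableEq ι] [Fintype α] {p : α → ℝ}

theorem sum_pi_prod_mul_prod (hp : ∑ x, p x = 1) (S : Finset ι) (g : ι → α → ℝ) :
    ∑ c : ι → α, (∏ k, p (c k)) * ∏ k ∈ S, g k (c k) = ∏ k ∈ S, ∑ x, p x * g k x := by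
  have hsum (k : ι) : ∑ x, p x * (if k ∈ S then g k x else 1) =
      if k ∈ S then ∑ x, p x * g k x else 1 := by
    split_ifs <;> simp [hp]
  simp_rw [← Fintype.prod_extend_by_one S, ← prod_mul_distrib, ← hsum]
  exact (Fintype.prod_sum fun k x => p x * if k ∈ S then g k x else 1).symm

theorem sum_pi_prod_mul_apply (hp : ∑ x, p x = 1) (j : ι) (f : α → ℝ) :
    ∑ c : ι → α, (∏ k, p (c k)) * f (c j) = ∑ x, p x * f x := by
  simpa using sum_pi_prod_mul_prod hp {j} (fun _ => f)

theorem sum_pi_prod_mul_apply_mul_apply (hp : ∑ x, p x = 1) {j j' : ι} (hjj' : j ≠ j')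
    (f g : α → ℝ) :
    ∑ c : ι → α, (∏ k, p (c k)) * (f (c j) * g (c j')) =
      (∑ x, p x * f x) * ∑ x, p x * g x := by
  simpa [hjj', hjj'.symm] using sum_pi_prod_mul_prod hp {j, j'} (fun k => if k = j then f else g)

end ProductWeights

theorem sum_fin_val_cast (M : ℕ) : ∑ j : Fin M, (j : ℝ) = M * (M - 1) / 2 := by
  induction M with
  | zero => simp
  | succ n ih =>
    rw [Fin.sum_univ_castSucc]
    simp only [Fin.val_castSucc, ih, Fin.val_last]
    push_cast
    ring

section ThresholdDecoding

variable {𝒳 𝒴 : Type*} [Fintype 𝒳] (W : 𝒳 → 𝒴 → ℝ) (pX : 𝒳 → ℝ) (pY : 𝒴 → ℝ)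
  (t : ℝ)

/-- `P(i(X;Y) ≤ log t)`, with the information-density test written as `W x y ≤ t * pY y`. -/
noncomputable def missProb [Fintype 𝒴] : ℝ :=
  ∑ x, ∑ y, pX x * W x y * (if W x y ≤ t * pY y then (1 : ℝ) else 0)

/-- `P(i(X;Ȳ) > log t)` for `Ȳ ∼ pY` independent of `X ∼ pX`. -/
noncomputable def falseAlarmProb [Fintype 𝒴] : ℝ :=
  ∑ x, ∑ y, pX x * pY y * (if t * pY y < W x y then (1 : ℝ) else 0)

variable {W pY t} {M : ℕ} {c : Fin M → 𝒳} {y : 𝒴}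

theorem dtDecode_eq_some {j : Fin M} (hj : t * pY y < W (c j) y)
    (hlt : ∀ j' < j, W (c j') y ≤ t * pY y) : dtDecode M W pY t c y = some j := by
  show (univ.filter fun j : Fin M => t * pY y < W (c j) y).min = (j : WithTop (Fin M))
  refine le_antisymm (min_le (mem_filter.2 ⟨mem_univ _, hj⟩)) (Finset.le_min fun a ha => ?_)
  exact WithTop.coe_le_coe.2 (not_lt.1 fun h => (hlt a h).not_gt (mem_filter.1 ha).2)

theorem dtDecode_error_le (j : Fin M) :
    (if dtDecode M W pY t c y = some j then (0 : ℝ) else 1) ≤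
      (if W (c j) y ≤ t * pY y then 1 else 0) +
        ∑ j' ∈ Iio j, if t * pY y < W (c j') y then 1 else 0 := by
  have hind {P : Prop} [Decidable P] : (0 : ℝ) ≤ if P then 1 else 0 := by split_ifs <;> norm_num
  by_cases hj : W (c j) y ≤ t * pY y
  · have := sum_nonneg fun j' (_ : j' ∈ Iio j) => hind (P := t * pY y < W (c j') y)
    rw [if_pos hj]
    split_ifs <;> linarith
  by_cases hlt : ∀ j' < j, W (c j') y ≤ t * pY y
  · rw [if_pos (dtDecode_eq_some (not_le.1 hj) hlt)]
    exact add_nonneg hind (sum_nonneg fun _ _ => hind)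
  push Not at hlt
  obtain ⟨j', hj'j, hj'⟩ := hlt
  calc (if dtDecode M W pY t c y = some j then (0 : ℝ) else 1)
      ≤ if t * pY y < W (c j') y then 1 else 0 := by rw [if_pos hj']; split_ifs <;> norm_num
    _ ≤ ∑ j' ∈ Iio j, if t * pY y < W (c j') y then 1 else 0 :=
      single_le_sum (f := fun j' => if t * pY y < W (c j') y then (1 : ℝ) else 0)
        (fun _ _ => hind) (mem_Iio.2 hj'j)
    _ ≤ _ := le_add_of_nonneg_left hind

variable {pX} [Fintype 𝒴]

theorem sum_codebook_error_le (hWnn : ∀ x y, 0 ≤ W x y) (hpXnn : ∀ x, 0 ≤ pX x)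
    (hpXsum : ∑ x, pX x = 1) (hpY : ∀ y, pY y = ∑ x, pX x * W x y) (j : Fin M) :
    ∑ c : Fin M → 𝒳, (∏ k, pX (c k)) *
        ∑ y, W (c j) y * (if dtDecode M W pY t c y = some j then 0 else 1)
      ≤ missProb W pX pY t + j * falseAlarmProb W pX pY t := by
  have hmiss : ∑ c : Fin M → 𝒳, (∏ k, pX (c k)) *
      ∑ y, W (c j) y * (if W (c j) y ≤ t * pY y then 1 else 0) = missProb W pX pY t := by
    rw [sum_pi_prod_mul_apply hpXsum j fun x => ∑ y, W x y * if W x y ≤ t * pY y then 1 else 0]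
    simp only [missProb, mul_sum, mul_assoc]
  have hfalse : ∀ j' ∈ Iio j, ∑ c : Fin M → 𝒳, (∏ k, pX (c k)) *
      ∑ y, W (c j) y * (if t * pY y < W (c j') y then 1 else 0) = falseAlarmProb W pX pY t := by
    intro j' hj'
    simp_rw [mul_sum]
    rw [sum_comm]
    conv_rhs => rw [falseAlarmProb, sum_comm]
    refine sum_congr rfl fun y _ => ?_
    rw [sum_pi_prod_mul_apply_mul_apply hpXsum (mem_Iio.1 hj').ne' (fun x => W x y)
      (fun x => if t * pY y < W x y then (1 : ℝ) else 0), ← hpY, mul_sum]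
    simp_rw [mul_left_comm (pY y), mul_assoc]
  calc ∑ c : Fin M → 𝒳, (∏ k, pX (c k)) *
        ∑ y, W (c j) y * (if dtDecode M W pY t c y = some j then 0 else 1)
      ≤ ∑ c : Fin M → 𝒳, (∏ k, pX (c k)) * ∑ y, W (c j) y *
          ((if W (c j) y ≤ t * pY y then 1 else 0) +
            ∑ j' ∈ Iio j, if t * pY y < W (c j') y then 1 else 0) := by
        gcongr with c _ y _
        · exact prod_nonneg fun k _ => hpXnn (c k)
        · exact hWnn _ _
        · exact dtDecode_error_le j
    _ = ∑ c : Fin M → 𝒳, (∏ k, pX (c k)) *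
          ∑ y, W (c j) y * (if W (c j) y ≤ t * pY y then 1 else 0) +
        ∑ j' ∈ Iio j, ∑ c : Fin M → 𝒳, (∏ k, pX (c k)) *
          ∑ y, W (c j) y * (if t * pY y < W (c j') y then 1 else 0) := by
        simp only [mul_add, mul_sum, sum_add_distrib]
        exact congrArg _ ((sum_congr rfl fun c _ => sum_comm).trans sum_comm)
    _ = missProb W pX pY t + j * falseAlarmProb W pX pY t := by
        rw [hmiss, sum_congr rfl hfalse, sum_const, Fin.card_Iio, nsmul_eq_mul]

end ThresholdDecoding

theorem stmt_6_general {𝒳 𝒴 : Type*} [Fintype 𝒳] [Fintype 𝒴]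
    (W : 𝒳 → 𝒴 → ℝ) (hWnn : ∀ x y, 0 ≤ W x y)
    (pX : 𝒳 → ℝ) (hpXnn : ∀ x, 0 ≤ pX x) (hpXsum : ∑ x, pX x = 1)
    (pY : 𝒴 → ℝ) (hpY : ∀ y, pY y = ∑ x, pX x * W x y)
    (M : ℕ) (hM : 0 < M) :
    ∑ c : Fin M → 𝒳, (∏ j, pX (c j)) *
        ((M : ℝ)⁻¹ * ∑ j, ∑ y,
          W (c j) y * (if dtDecode M W pY (((M : ℝ) - 1) / 2) c y = some j then 0 else 1))
      ≤ (∑ x, ∑ y, pX x * W x y *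
            (if W x y ≤ (((M : ℝ) - 1) / 2) * pY y then (1 : ℝ) else 0))
        + (((M : ℝ) - 1) / 2) *
          ∑ x, ∑ y, pX x * pY y *
            (if W x y > (((M : ℝ) - 1) / 2) * pY y then (1 : ℝ) else 0) := by
  set t : ℝ := ((M : ℝ) - 1) / 2
  calc ∑ c : Fin M → 𝒳, (∏ j, pX (c j)) *
        ((M : ℝ)⁻¹ * ∑ j, ∑ y, W (c j) y * (if dtDecode M W pY t c y = some j then 0 else 1))
      = (M : ℝ)⁻¹ * ∑ j, ∑ c : Fin M → 𝒳, (∏ k, pX (c k)) *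
          ∑ y, W (c j) y * (if dtDecode M W pY t c y = some j then 0 else 1) := by
        simp only [mul_sum, mul_left_comm _ (M : ℝ)⁻¹]
        exact sum_comm
    _ ≤ (M : ℝ)⁻¹ * ∑ j : Fin M, (missProb W pX pY t + j * falseAlarmProb W pX pY t) := by
        gcongr with j
        exact sum_codebook_error_le hWnn hpXnn hpXsum hpY j
    _ = missProb W pX pY t + t * falseAlarmProb W pX pY t := by
        have hM0 : (M : ℝ) ≠ 0 := Nat.cast_ne_zero.2 hM.ne'
        rw [sum_add_distrib, ← sum_mul, sum_fin_val_cast, sum_const, card_univ,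
          Fintype.card_fin, nsmul_eq_mul]
        field_simp
        ring

/-- Dependence-testing bound (Polyanskiy–Poor–Verdú): for a finite channel `W` with input
distribution `pX` (output marginal `pY`), a codebook of `M` i.i.d. codewords and the
threshold decoder with threshold `log((M−1)/2)`, the error probability averaged over
codebooks and equiprobable messages is at most
P(i(X;Y) ≤ log((M−1)/2)) + ((M−1)/2)·P(i(X;Ȳ) > log((M−1)/2)). -/
theorem stmt_6 {𝒳 𝒴 : Type*} [Fintype 𝒳] [Fintype 𝒴]
    (W : 𝒳 → 𝒴 → ℝ) (hWnn : ∀ x y, 0 ≤ W x y) (hWsum : ∀ x, ∑ y, W x y = 1)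
    (pX : 𝒳 → ℝ) (hpXnn : ∀ x, 0 ≤ pX x) (hpXsum : ∑ x, pX x = 1)
    (pY : 𝒴 → ℝ) (hpY : ∀ y, pY y = ∑ x, pX x * W x y)
    (M : ℕ) (hM : 0 < M) :
    ∑ c : Fin M → 𝒳, (∏ j, pX (c j)) *
        ((M : ℝ)⁻¹ * ∑ j, ∑ y,
          W (c j) y * (if dtDecode M W pY (((M : ℝ) - 1) / 2) c y = some j then 0 else 1))
      ≤ (∑ x, ∑ y, pX x * W x y *
            (if W x y ≤ (((M : ℝ) - 1) / 2) * pY y then (1 : ℝ) else 0))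
        + (((M : ℝ) - 1) / 2) *
          ∑ x, ∑ y, pX x * pY y *
            (if W x y > (((M : ℝ) - 1) / 2) * pY y then (1 : ℝ) else 0) :=
  stmt_6_general W hWnn pX hpXnn hpXsum pY hpY M hM
end
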